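/- arXiv:2207.05646 — 2 statements merged into one kernel-verified Lean document; each statement's English description precedes it below -/
import Mathlib

section
/- ReMAD channels are phase covariant: for every θ ∈ ℝ, Φ_Γ(U(θ) ρ U(θ)†) = U(θ) Φ_Γ(ρ) U(θ)†, where U(θ) = Σ_{j=0}^{d-1} e^{-ijθ} |j⟩⟨j|. -/
open scoped BigOperators
open Matrix

/-- ReMAD Kraus operator `K^{(i)} = Σ_{l=0}^{d-i-1} √(γ_{i+l,l}) |l⟩⟨i+l|`. -/
noncomputable def remadKraus (d : ℕ) (γ : ℕ → ℕ → ℝ) (i : Fin d) :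
    Matrix (Fin d) (Fin d) ℂ :=
  Matrix.of fun a b => if (b : ℕ) = (i : ℕ) + (a : ℕ) then ((Real.sqrt (γ b a) : ℝ) : ℂ) else 0

/-- The ReMAD channel `Φ_Γ(ρ) = Σ_i K^{(i)} ρ K^{(i)†}`. -/
noncomputable def remadChannel (d : ℕ) (γ : ℕ → ℕ → ℝ) (ρ : Matrix (Fin d) (Fin d) ℂ) :
    Matrix (Fin d) (Fin d) ℂ :=
  ∑ i : Fin d, remadKraus d γ i * ρ * (remadKraus d γ i)ᴴ

/-- The diagonal phase unitary `U(θ) = Σ_j e^{-ijθ} |j⟩⟨j|`. -/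
noncomputable def phaseU (d : ℕ) (θ : ℝ) : Matrix (Fin d) (Fin d) ℂ :=
  Matrix.diagonal fun j : Fin d => Complex.exp (-Complex.I * (j : ℕ) * (θ : ℂ))

/-!
Each Kraus operator `K^{(i)}` maps `|i + l⟩` to `|l⟩`, so `K^{(i)} U(θ) = e^{-iiθ} U(θ) K^{(i)}`.
The scalar `e^{-iiθ}` has modulus one and cancels between `K^{(i)}` and `K^{(i)†}`, so every
term `K^{(i)} ρ K^{(i)†}` of the channel is already covariant.
-/

noncomputable def phase (n : ℕ) (θ : ℝ) : ℂ :=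
  Complex.exp (-Complex.I * n * θ)

lemma phaseU_eq_diagonal_phase (d : ℕ) (θ : ℝ) :
    phaseU d θ = Matrix.diagonal fun j : Fin d => phase j θ :=
  rfl

lemma phase_add (m n : ℕ) (θ : ℝ) : phase (m + n) θ = phase m θ * phase n θ := by
  rw [phase, phase, phase, ← Complex.exp_add]
  push_cast
  ring_nf

lemma star_phase_mul_self (n : ℕ) (θ : ℝ) : star (phase n θ) * phase n θ = 1 := by
  have h : phase n θ = Complex.exp ((-(n * θ) : ℝ) * Complex.I) := by
    rw [phase]
    push_cast
    ring_nf
  rw [RCLike.star_def, Complex.conj_mul', h, Complex.norm_exp_ofReal_mul_I]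
  norm_num

lemma mul_conj_conjTranspose_comm_of_mul_eq_smul_mul {n R : Type*} [Fintype n] [CommRing R]
    [StarRing R] {K U : Matrix n n R} {c : R} (hKU : K * U = c • (U * K))
    (hc : star c * c = 1) (ρ : Matrix n n R) :
    K * (U * ρ * Uᴴ) * Kᴴ = U * (K * ρ * Kᴴ) * Uᴴ :=
  calc K * (U * ρ * Uᴴ) * Kᴴ = (K * U) * ρ * (K * U)ᴴ := by
        simp only [conjTranspose_mul, Matrix.mul_assoc]
    _ = (star c * c) • (U * (K * ρ * Kᴴ) * Uᴴ) := by
        rw [hKU, conjTranspose_smul, conjTranspose_mul]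
        simp only [Matrix.smul_mul, Matrix.mul_smul, smul_smul, Matrix.mul_assoc, mul_comm]
    _ = U * (K * ρ * Kᴴ) * Uᴴ := by rw [hc, one_smul]

lemma remadKraus_mul_phaseU (d : ℕ) (γ : ℕ → ℕ → ℝ) (i : Fin d) (θ : ℝ) :
    remadKraus d γ i * phaseU d θ = phase i θ • (phaseU d θ * remadKraus d γ i) := by
  ext a b
  rw [Matrix.smul_apply, phaseU_eq_diagonal_phase, mul_diagonal, diagonal_mul]
  simp only [remadKraus, of_apply, smul_eq_mul]
  split_ifs with h
  · rw [h, phase_add]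
    ring
  · simp

theorem remad_phase_covariant_general (d : ℕ) (γ : ℕ → ℕ → ℝ)
    (θ : ℝ) (ρ : Matrix (Fin d) (Fin d) ℂ) :
    remadChannel d γ (phaseU d θ * ρ * (phaseU d θ)ᴴ) =
      phaseU d θ * remadChannel d γ ρ * (phaseU d θ)ᴴ := by
  rw [remadChannel, remadChannel, Matrix.mul_sum, Matrix.sum_mul]
  exact Finset.sum_congr rfl fun i _ =>
    mul_conj_conjTranspose_comm_of_mul_eq_smul_mul (remadKraus_mul_phaseU d γ i θ)
      (star_phase_mul_self i θ) ρ

/-- ReMAD channels are phase covariant: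
`Φ_Γ(U(θ) ρ U(θ)†) = U(θ) Φ_Γ(ρ) U(θ)†` for every `θ ∈ ℝ`. -/
theorem remad_phase_covariant (d : ℕ) (hd : 1 ≤ d) (γ : ℕ → ℕ → ℝ)
    (hnn : ∀ j k : ℕ, k ≤ j → j < d → 0 ≤ γ j k)
    (hsum : ∀ j : ℕ, j < d → ∑ k ∈ Finset.range (j + 1), γ j k = 1)
    (θ : ℝ) (ρ : Matrix (Fin d) (Fin d) ℂ) :
    remadChannel d γ (phaseU d θ * ρ * (phaseU d θ)ᴴ) =
      phaseU d θ * remadChannel d γ ρ * (phaseU d θ)ᴴ :=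
  remad_phase_covariant_general d γ θ ρ
end

section
/- Each Kraus operator of a ReMAD channel shifts phases: K^{(i)} U(θ) = e^{-iiθ} U(θ) K^{(i)} for every i ∈ {0,…,d-1} and θ ∈ ℝ, where U(θ) = Σ_j e^{-ijθ}|j⟩⟨j| (here the scalar exponent is i·θ times the Kraus index i). -/
open scoped BigOperators
open Matrix

theorem Matrix.mul_diagonal_eq_smul_diagonal_mul {n R : Type*} [Fintype n] [DecidableEq n]
    [CommSemiring R] (K : Matrix n n R) (u : n → R) (c : R)
    (h : ∀ a b, K a b ≠ 0 → u b = c * u a) :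
    K * diagonal u = c • (diagonal u * K) := by
  ext a b
  rw [mul_diagonal, smul_apply, diagonal_mul, smul_eq_mul]
  by_cases hK : K a b = 0
  · simp [hK]
  · rw [h a b hK]
    ring

theorem remadKraus_eq_zero_of_ne {d : ℕ} (γ : ℕ → ℕ → ℝ) (i a b : Fin d)
    (h : (b : ℕ) ≠ i + a) : remadKraus d γ i a b = 0 := by
  simp [remadKraus, h]

theorem Complex.exp_neg_I_mul_natCast_add_mul (θ : ℝ) (k j : ℕ) :
    Complex.exp (-Complex.I * ((k + j : ℕ) : ℂ) * (θ : ℂ)) =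
      Complex.exp (-Complex.I * (k : ℂ) * (θ : ℂ)) * Complex.exp (-Complex.I * (j : ℂ) * (θ : ℂ)) := by
  rw [← Complex.exp_add]
  push_cast
  ring_nf

theorem remad_kraus_phase_shift_general (d : ℕ) (γ : ℕ → ℕ → ℝ)
    (i : Fin d) (θ : ℝ) :
    remadKraus d γ i * phaseU d θ =
      Complex.exp (-Complex.I * (i : ℕ) * (θ : ℂ)) • (phaseU d θ * remadKraus d γ i) := by
  refine mul_diagonal_eq_smul_diagonal_mul _ _ _ fun a b hK => ?_
  have hb : (b : ℕ) = i + a := by_contra fun hb => hK (remadKraus_eq_zero_of_ne γ i a b hb)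
  rw [hb, Complex.exp_neg_I_mul_natCast_add_mul]

/-- Each ReMAD Kraus operator shifts phases: `K^{(i)} U(θ) = e^{-i·iθ} U(θ) K^{(i)}`,
where the scalar exponent is the Kraus index `i` times `θ`. -/
theorem remad_kraus_phase_shift (d : ℕ) (hd : 1 ≤ d) (γ : ℕ → ℕ → ℝ)
    (hnn : ∀ j k : ℕ, k ≤ j → j < d → 0 ≤ γ j k)
    (hsum : ∀ j : ℕ, j < d → ∑ k ∈ Finset.range (j + 1), γ j k = 1)
    (i : Fin d) (θ : ℝ) :
    remadKraus d γ i * phaseU d θ =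
      Complex.exp (-Complex.I * (i : ℕ) * (θ : ℂ)) • (phaseU d θ * remadKraus d γ i) :=
  remad_kraus_phase_shift_general d γ i θ
end
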